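/- Let f have coordinate-wise Lipschitz gradient with constant L_i along e_i, let x ∈ [l,u], and suppose f(x + α e_i) > f(x) − γα² for some α > 0 with x + α e_i ∈ [l,u]. Then −∇_i f(x) < (γ + L_i) α. -/

import Mathlib

/-!
Restrict `f` to the segment `s ↦ x + s • eᵢ`, `s ∈ [0, α]`, which stays in the convex box.
By the mean value theorem the slope `(f (x + α • eᵢ) - f x) / α > -γ α` is the partial
derivative `gᵢ` at some intermediate point, and the coordinate-wise Lipschitz bound moves it
back to `x` at the cost of `Lᵢ α`.
-/

/-- The box `[l, u]` in `ℝⁿ`. -/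
def Box {n : ℕ} (l u : EuclideanSpace ℝ (Fin n)) : Set (EuclideanSpace ℝ (Fin n)) :=
  {y | ∀ j, l j ≤ y j ∧ y j ≤ u j}

open Set

theorem convex_box {n : ℕ} (l u : EuclideanSpace ℝ (Fin n)) : Convex ℝ (Box l u) := by
  intro y hy z hz a b ha hb hab j
  obtain ⟨hyl, hyu⟩ := hy j
  obtain ⟨hzl, hzu⟩ := hz j
  simp only [PiLp.add_apply, PiLp.smul_apply, smul_eq_mul]
  obtain rfl : b = 1 - a := by linarith
  constructor <;> nlinarith

theorem Convex.add_smul_mem_of_mem_Icc {E : Type*} [AddCommGroup E] [Module ℝ E] {s : Set E}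
    (hs : Convex ℝ s) {x v : E} {α t : ℝ} (hα : 0 < α) (hx : x ∈ s) (hy : x + α • v ∈ s)
    (ht : t ∈ Icc 0 α) : x + t • v ∈ s := by
  have htα : t / α ∈ Icc (0 : ℝ) 1 :=
    ⟨div_nonneg ht.1 hα.le, (div_le_one hα).mpr ht.2⟩
  simpa [smul_smul, div_mul_cancel₀ t hα.ne'] using hs.add_smul_mem hx hy htα

theorem HasGradientAt.hasDerivAt_add_smul {F : Type*} [NormedAddCommGroup F]
    [InnerProductSpace ℝ F] [CompleteSpace F] {f : F → ℝ} {g x v : F} {t : ℝ}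
    (h : HasGradientAt f g (x + t • v)) :
    HasDerivAt (fun s : ℝ => f (x + s • v)) (inner ℝ g v) t := by
  have hline : HasDerivAt (fun s : ℝ => x + s • v) v t := by
    simpa using ((hasDerivAt_id t).smul_const v).const_add x
  have := h.hasFDerivAt.comp_hasDerivAt t hline
  rwa [InnerProductSpace.toDual_apply_apply] at this

theorem neg_deriv_lt_of_not_sufficient_decrease {φ φ' : ℝ → ℝ} {L γ α : ℝ} (hα : 0 < α)
    (hφ : ∀ s ∈ Icc 0 α, HasDerivAt φ (φ' s) s)
    (hlip : ∀ s ∈ Icc 0 α, |φ' s - φ' 0| ≤ L * s)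
    (hfail : φ α > φ 0 - γ * α ^ 2) : -φ' 0 < (γ + L) * α := by
  obtain ⟨c, hc, hslope⟩ := exists_hasDerivAt_eq_slope φ φ' hα
    (fun s hs => (hφ s hs).continuousAt.continuousWithinAt)
    (fun s hs => hφ s (Ioo_subset_Icc_self hs))
  rw [sub_zero] at hslope
  have hc_slope : -γ * α < φ' c := by
    rw [hslope, lt_div_iff₀ hα]
    linarith
  have hLc := hlip c (Ioo_subset_Icc_self hc)
  have hL : 0 ≤ L := nonneg_of_mul_nonneg_left ((abs_nonneg _).trans hLc) hc.1
  have hLcα : L * c ≤ L * α := mul_le_mul_of_nonneg_left hc.2.le hL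
  linarith [(abs_le.mp hLc).2]

theorem stmt14_general {n : ℕ} (f : EuclideanSpace ℝ (Fin n) → ℝ)
    (g : EuclideanSpace ℝ (Fin n) → EuclideanSpace ℝ (Fin n))
    (l u x : EuclideanSpace ℝ (Fin n)) (i : Fin n) (Li γ α : ℝ)
    (hα : 0 < α)
    (hgrad : ∀ y ∈ Box l u, HasGradientAt f (g y) y)
    (hlip : ∀ y : EuclideanSpace ℝ (Fin n), ∀ s : ℝ, y ∈ Box l u →
      y + s • EuclideanSpace.single i (1:ℝ) ∈ Box l u →
      |g (y + s • EuclideanSpace.single i (1:ℝ)) i - g y i| ≤ Li * |s|)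
    (hx : x ∈ Box l u) (hfeas : x + α • EuclideanSpace.single i (1:ℝ) ∈ Box l u)
    (hfail : f (x + α • EuclideanSpace.single i (1:ℝ)) > f x - γ * α ^ 2) :
    -(g x i) < (γ + Li) * α := by
  set e := EuclideanSpace.single i (1:ℝ)
  have hmem : ∀ s ∈ Icc 0 α, x + s • e ∈ Box l u := fun s hs =>
    (convex_box l u).add_smul_mem_of_mem_Icc hα hx hfeas hs
  have key := neg_deriv_lt_of_not_sufficient_decrease (φ := fun s => f (x + s • e))
    (φ' := fun s => g (x + s • e) i) (L := Li) hα
    (fun s hs => by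
      simpa [e, EuclideanSpace.inner_single_right] using
        (hgrad _ (hmem s hs)).hasDerivAt_add_smul)
    (fun s hs => by simpa [abs_of_nonneg hs.1] using hlip x s hx (hmem s hs))
    (by simpa using hfail)
  simpa using key

theorem stmt14 {n : ℕ} (f : EuclideanSpace ℝ (Fin n) → ℝ)
    (g : EuclideanSpace ℝ (Fin n) → EuclideanSpace ℝ (Fin n))
    (l u x : EuclideanSpace ℝ (Fin n)) (i : Fin n) (Li γ α : ℝ)
    (hLi : 0 < Li) (hγ : 0 < γ) (hα : 0 < α)
    (hgrad : ∀ y ∈ Box l u, HasGradientAt f (g y) y)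
    (hlip : ∀ y : EuclideanSpace ℝ (Fin n), ∀ s : ℝ, y ∈ Box l u →
      y + s • EuclideanSpace.single i (1:ℝ) ∈ Box l u →
      |g (y + s • EuclideanSpace.single i (1:ℝ)) i - g y i| ≤ Li * |s|)
    (hx : x ∈ Box l u) (hfeas : x + α • EuclideanSpace.single i (1:ℝ) ∈ Box l u)
    (hfail : f (x + α • EuclideanSpace.single i (1:ℝ)) > f x - γ * α ^ 2) :
    -(g x i) < (γ + Li) * α :=
  stmt14_general f g l u x i Li γ α hα hgrad hlip hx hfeas hfail
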